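/- arXiv:1904.06545 — 3 statements merged into one kernel-verified Lean document; each statement's English description precedes it below -/
import Mathlib

section
/- Let Q be a finite group acting by automorphisms on a finite group N, and suppose N is the internal direct product of subgroups S_1, ..., S_t (t ≥ 1), i.e. the S_i pairwise commute elementwise, generate N, and the multiplication map S_1 × ... × S_t → N is a bijection. Suppose the action of Q permutes the set {S_1, ..., S_t} transitively, let Q_1 be the stabilizer of S_1 in Q, and let a_1, ..., a_t ∈ Q be a transversal with a_i · S_1 = S_i for each i. Let ψ : S_1 → ℂ be a function invariant under Q_1 (i.e. ψ(g·s) = ψ(s) for all g ∈ Q_1 and s ∈ S_1). Define γ : N → ℂ by γ(x) = ∏_{i=1}^{t} ψ(a_i⁻¹ · x_i), where x = x_1 x_2 ⋯ x_t is the unique decomposition of x with x_i ∈ S_i (note a_i⁻¹ · x_i ∈ S_1). Then γ is Q-invariant: γ(q·x) = γ(x) for all q ∈ Q and x ∈ N. -/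
open Pointwise

/-!
Write `x = x₁ ⋯ x_t` with `xᵢ ∈ S i`. The element `q` permutes the factors, `q • S i = S (σ i)`,
and since the factors commute, `q • x = ∏ⱼ q • x_{σ⁻¹ j}` is again the decomposition of `q • x`.
Its `σ i`-th factor contributes `ψ ((a (σ i))⁻¹ • q • xᵢ)`, and `(a (σ i))⁻¹ * q * a i` stabilises
`S 0`, so by invariance of `ψ` this equals `ψ ((a i)⁻¹ • xᵢ)`. If two of the `S i` coincide,
uniqueness of the decomposition makes them trivial, hence by transitivity all `S i` and `N` are.
-/

theorem List.prod_ofFn_eq_single {M : Type*} [Monoid M] :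
    ∀ {n : ℕ} (g : Fin n → M) (i : Fin n), (∀ j ≠ i, g j = 1) → (List.ofFn g).prod = g i
  | 0, _, i, _ => i.elim0
  | n + 1, g, i, h => by
    rw [List.ofFn_succ, List.prod_cons]
    cases i using Fin.cases with
    | zero =>
      rw [List.prod_eq_one fun y hy => ?_, mul_one]
      obtain ⟨k, rfl⟩ := List.mem_ofFn.mp hy
      exact h _ k.succ_ne_zero
    | succ i =>
      rw [h 0 (Fin.succ_ne_zero i).symm, one_mul]
      exact prod_ofFn_eq_single _ i fun k hk => h _ (Fin.succ_injective _ |>.ne hk)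

theorem List.prod_ofFn_comp_perm {M : Type*} [Monoid M] {n : ℕ} (g : Fin n → M)
    (hg : _root_.Pairwise fun i j => Commute (g i) (g j)) (e : Equiv.Perm (Fin n)) :
    (List.ofFn (g ∘ e)).prod = (List.ofFn g).prod :=
  (e.ofFn_comp_perm g).prod_eq' <| List.pairwise_ofFn.mpr fun _ _ hij =>
    hg (e.injective.ne hij.ne)

section InternalProduct

variable {N : Type*} [Group N] {t : ℕ} (S : Fin t → Subgroup N)

theorem eq_bot_of_eq_of_injective_prod
    (hinj : Function.Injective fun f : (∀ i, S i) => (List.ofFn fun i => (f i : N)).prod)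
    {i j : Fin t} (hij : i ≠ j) (hS : S i = S j) : S i = ⊥ := by
  refine (Subgroup.eq_bot_iff_forall _).mpr fun s hs => ?_
  have prod_single : ∀ k (hk : s ∈ S k),
      (List.ofFn fun l => ((Pi.mulSingle k ⟨s, hk⟩ : ∀ l, S l) l : N)).prod = s := fun k hk => by
    rw [List.prod_ofFn_eq_single _ k fun l hl => by rw [Pi.mulSingle_eq_of_ne hl]; rfl,
      Pi.mulSingle_eq_same]
  have h := congrFun (hinj ((prod_single i hs).trans (prod_single j (hS ▸ hs)).symm)) i
  rw [Pi.mulSingle_eq_same, Pi.mulSingle_eq_of_ne hij] at h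
  exact congrArg Subtype.val h

theorem subsingleton_of_surjective_prod
    (hsurj : Function.Surjective fun f : (∀ i, S i) => (List.ofFn fun i => (f i : N)).prod)
    (hbot : ∀ i, S i = ⊥) : Subsingleton N := by
  refine subsingleton_of_forall_eq 1 fun x => ?_
  obtain ⟨f, rfl⟩ := hsurj x
  refine List.prod_eq_one fun y hy => ?_
  obtain ⟨i, rfl⟩ := List.mem_ofFn.mp hy
  exact Subgroup.mem_bot.mp (hbot i ▸ (f i).2)

end InternalProduct

section Action

variable {Q N : Type*} [Group Q] [Group N] [MulDistribMulAction Q N] {t : ℕ}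
  {S : Fin t → Subgroup N}

theorem injective_or_subsingleton_of_bijective_prod
    (hbij : Function.Bijective fun f : (∀ i, S i) => (List.ofFn fun i => (f i : N)).prod)
    (htrans : ∀ i j, ∃ q : Q, q • S i = S j) :
    Function.Injective S ∨ Subsingleton N := by
  refine or_iff_not_imp_left.mpr fun hS => subsingleton_of_surjective_prod S hbij.2 fun k => ?_
  obtain ⟨i, j, hS, hij⟩ : ∃ i j, S i = S j ∧ i ≠ j := by
    simpa [Function.Injective] using hS
  obtain ⟨q, hq⟩ := htrans i k
  rw [← hq, eq_bot_of_eq_of_injective_prod S hbij.1 hij hS, Subgroup.smul_bot]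

theorem exists_perm_smul_eq (hS : Function.Injective S) (q : Q)
    (hq : ∀ i, ∃ j, q • S i = S j) : ∃ e : Equiv.Perm (Fin t), ∀ i, q • S i = S (e i) := by
  choose σ hσ using hq
  have hσ_inj : Function.Injective σ := fun i j hij =>
    hS <| MulAction.injective q <| by simp only [hσ, hij]
  exact ⟨Equiv.ofBijective σ hσ_inj.bijective_of_finite, hσ⟩

theorem smul_mem_of_smul_eq {q : Q} {H K : Subgroup N} (h : q • H = K) {y : N} (hy : y ∈ H) :
    q • y ∈ K :=
  h ▸ Subgroup.smul_mem_pointwise_smul _ q _ hy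

theorem smul_prod_ofFn_eq (hcomm : ∀ i j, i ≠ j → ∀ x ∈ S i, ∀ y ∈ S j, x * y = y * x)
    {q : Q} {e : Equiv.Perm (Fin t)} (he : ∀ i, q • S i = S (e i)) {x : Fin t → N}
    (hx : ∀ i, x i ∈ S i) :
    q • (List.ofFn x).prod = (List.ofFn fun j => q • x (e.symm j)).prod := by
  have hmem : ∀ j, q • x (e.symm j) ∈ S j := fun j =>
    smul_mem_of_smul_eq (by rw [he, e.apply_symm_apply]) (hx _)
  rw [List.smul_prod', List.map_ofFn, ← List.prod_ofFn_comp_perm _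
    (fun j k hjk => hcomm j k hjk _ (hmem j) _ (hmem k)) e]
  simp [Function.comp_def]

theorem apply_inv_smul_smul_of_stabilizer_invariant {α : Type*} {a : Fin t → Q} {i₀ : Fin t}
    (ha : ∀ i, a i • S i₀ = S i) {ψ : N → α}
    (hψ : ∀ g : Q, g • S i₀ = S i₀ → ∀ s ∈ S i₀, ψ (g • s) = ψ s)
    {q : Q} {i k : Fin t} (hq : q • S i = S k) {y : N} (hy : y ∈ S i) :
    ψ ((a k)⁻¹ • q • y) = ψ ((a i)⁻¹ • y) := by
  have hstab : ((a k)⁻¹ * q * a i) • S i₀ = S i₀ := by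
    rw [mul_smul, mul_smul, ha i, hq, ← ha k, inv_smul_smul]
  have hs : (a i)⁻¹ • y ∈ S i₀ := smul_mem_of_smul_eq (by rw [← ha i, inv_smul_smul]) hy
  simpa only [mul_smul, smul_inv_smul] using hψ _ hstab _ hs

end Action

theorem stmt4_general (Q N : Type) [Group Q] [Group N]
    [MulDistribMulAction Q N]
    (t : ℕ) (ht : 0 < t) (S : Fin t → Subgroup N)
    -- the `S i` pairwise commute elementwise
    (hcomm : ∀ i j : Fin t, i ≠ j → ∀ x ∈ S i, ∀ y ∈ S j, x * y = y * x)
    -- the multiplication map `S 0 × ⋯ × S (t-1) → N` is a bijection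
    (hbij : Function.Bijective
      (fun f : (∀ i : Fin t, S i) => (List.ofFn fun i => ((f i : N))).prod))
    -- `Q` permutes the subgroups `S i` ...
    (hperm : ∀ (q : Q) (i : Fin t), ∃ j : Fin t, q • S i = S j)
    -- ... transitively
    (htrans : ∀ i j : Fin t, ∃ q : Q, q • S i = S j)
    -- a transversal `a` with `a i • S 0 = S i`
    (a : Fin t → Q) (ha : ∀ i : Fin t, a i • S ⟨0, ht⟩ = S i)
    -- `ψ` is a function on `S 0` invariant under the stabilizer `Q₁` of `S 0`
    (ψ : N → ℂ)
    (hψ : ∀ q : Q, q • S ⟨0, ht⟩ = S ⟨0, ht⟩ → ∀ s ∈ S ⟨0, ht⟩, ψ (q • s) = ψ s)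
    -- `γ (x₁ ⋯ x_t) = ∏ i, ψ ((a i)⁻¹ • x i)`
    (γ : N → ℂ)
    (hγ : ∀ f : (∀ i : Fin t, S i),
      γ ((List.ofFn fun i => ((f i : N))).prod) = ∏ i : Fin t, ψ ((a i)⁻¹ • (f i : N)))
    (q : Q) (x : N) : γ (q • x) = γ x := by
  obtain ⟨f, rfl⟩ := hbij.2 x
  rcases injective_or_subsingleton_of_bijective_prod hbij htrans with hS | hN
  · obtain ⟨e, he⟩ := exists_perm_smul_eq hS q (hperm q)
    set y : Fin t → N := fun i => f i
    have hy : ∀ i, y i ∈ S i := fun i => (f i).2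
    have hqy : ∀ j, q • y (e.symm j) ∈ S j := fun j =>
      smul_mem_of_smul_eq (by rw [he, e.apply_symm_apply]) (hy _)
    calc γ (q • (List.ofFn y).prod)
        = γ (List.ofFn fun j => ((⟨_, hqy j⟩ : S j) : N)).prod := by
          rw [smul_prod_ofFn_eq hcomm he hy]
      _ = ∏ j, ψ ((a j)⁻¹ • q • y (e.symm j)) := hγ _
      _ = ∏ i, ψ ((a (e i))⁻¹ • q • y i) := by
          simpa only [Equiv.symm_apply_apply] using
            (Equiv.prod_comp e fun j => ψ ((a j)⁻¹ • q • y (e.symm j))).symm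
      _ = ∏ i, ψ ((a i)⁻¹ • y i) :=
          Finset.prod_congr rfl fun i _ =>
            apply_inv_smul_smul_of_stabilizer_invariant ha hψ (he i) (hy i)
      _ = γ (List.ofFn y).prod := (hγ f).symm
  · exact congrArg γ (Subsingleton.elim _ _)

theorem stmt4 (Q N : Type) [Group Q] [Group N] [Finite Q] [Finite N]
    [MulDistribMulAction Q N]
    (t : ℕ) (ht : 0 < t) (S : Fin t → Subgroup N)
    -- the `S i` pairwise commute elementwise
    (hcomm : ∀ i j : Fin t, i ≠ j → ∀ x ∈ S i, ∀ y ∈ S j, x * y = y * x)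
    -- the `S i` generate `N`
    (hgen : (⨆ i, S i) = ⊤)
    -- the multiplication map `S 0 × ⋯ × S (t-1) → N` is a bijection
    (hbij : Function.Bijective
      (fun f : (∀ i : Fin t, S i) => (List.ofFn fun i => ((f i : N))).prod))
    -- `Q` permutes the subgroups `S i` ...
    (hperm : ∀ (q : Q) (i : Fin t), ∃ j : Fin t, q • S i = S j)
    -- ... transitively
    (htrans : ∀ i j : Fin t, ∃ q : Q, q • S i = S j)
    -- a transversal `a` with `a i • S 0 = S i`
    (a : Fin t → Q) (ha : ∀ i : Fin t, a i • S ⟨0, ht⟩ = S i)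
    -- `ψ` is a function on `S 0` invariant under the stabilizer `Q₁` of `S 0`
    (ψ : N → ℂ)
    (hψ : ∀ q : Q, q • S ⟨0, ht⟩ = S ⟨0, ht⟩ → ∀ s ∈ S ⟨0, ht⟩, ψ (q • s) = ψ s)
    -- `γ (x₁ ⋯ x_t) = ∏ i, ψ ((a i)⁻¹ • x i)`
    (γ : N → ℂ)
    (hγ : ∀ f : (∀ i : Fin t, S i),
      γ ((List.ofFn fun i => ((f i : N))).prod) = ∏ i : Fin t, ψ ((a i)⁻¹ • (f i : N)))
    (q : Q) (x : N) : γ (q • x) = γ x :=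
  stmt4_general Q N t ht S hcomm hbij hperm htrans a ha ψ hψ γ hγ q x
end

section
/- Let p be a prime and let n ≥ 1 be a natural number with base-p expansion n = a_1 p^{n_1} + a_2 p^{n_2} + ... + a_k p^{n_k}, where 0 ≤ n_1 < n_2 < ... < n_k and 1 ≤ a_j ≤ p−1 for all j. Then the number of integers x with 0 ≤ x ≤ n−1 such that p does not divide the binomial coefficient C(n−1, x) equals a_1 · p^{n_1} · ∏_{j=2}^{k} (a_j + 1). -/
/-!
Write `N(m)` for the number of `x ≤ m` with `p ∤ C(m, x)`. Lucas' congruence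
`C(r + p q, z + p y) ≡ C(r, z) C(q, y)` shows `N(r + p q) = (r + 1) N(q)` for `r < p` (Fine's
theorem), so `N(m)` is the product of `d + 1` over the base-`p` digits `d` of `m`. The digits of
`n - 1` are those of `n` except that the lowest nonzero digit `a₁` becomes `a₁ - 1` and the
`n₁` zeros below it become `p - 1`, which gives `a₁ p^{n₁} ∏_{j ≥ 2} (a_j + 1)`.
-/

open Finset

lemma Fin.prod_univ_erase_zero {M : Type*} [CommMonoid M] {k : ℕ} (f : Fin (k + 1) → M) :
    ∏ j ∈ univ.erase 0, f j = ∏ j : Fin k, f j.succ := by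
  rw [Fin.univ_succ, erase_cons, prod_map]
  rfl

def numChooseNotDvd (p m : ℕ) : ℕ :=
  #{x ∈ range (m + 1) | ¬ p ∣ m.choose x}

section

variable {p : ℕ}

lemma le_of_not_dvd_choose {m x : ℕ} (h : ¬ p ∣ m.choose x) : x ≤ m := by
  by_contra! hmx
  exact h (by rw [Nat.choose_eq_zero_of_lt hmx]; exact dvd_zero p)

lemma Nat.Prime.not_dvd_choose_iff_le (hp : p.Prime) {r z : ℕ} (hr : r < p) :
    ¬ p ∣ r.choose z ↔ z ≤ r := by
  refine ⟨le_of_not_dvd_choose, fun hz h => ?_⟩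
  have hchoose : r.choose z ∣ r.factorial :=
    Dvd.intro _ ((mul_assoc _ _ _).symm.trans (Nat.choose_mul_factorial_mul_factorial hz))
  exact hr.not_ge (hp.dvd_factorial.mp (h.trans hchoose))

lemma Nat.Prime.not_dvd_choose_add_mul_iff (hp : p.Prime) {r z : ℕ} (hr : r < p) (hz : z < p)
    (q y : ℕ) : ¬ p ∣ (r + p * q).choose (z + p * y) ↔ z ≤ r ∧ ¬ p ∣ q.choose y := by
  have := Fact.mk hp
  have lucas := Choose.choose_modEq_choose_mod_mul_choose_div_nat (n := r + p * q)
    (k := z + p * y) (p := p)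
  simp only [Nat.add_mul_mod_self_left, Nat.mod_eq_of_lt hr, Nat.mod_eq_of_lt hz,
    Nat.add_mul_div_left _ _ hp.pos, Nat.div_eq_of_lt hr, Nat.div_eq_of_lt hz, zero_add] at lucas
  rw [lucas.dvd_iff dvd_rfl, hp.dvd_mul, not_or, hp.not_dvd_choose_iff_le hr]

lemma numChooseNotDvd_zero (hp : p.Prime) : numChooseNotDvd p 0 = 1 := by
  simp [numChooseNotDvd, filter_singleton, hp.ne_one]

theorem numChooseNotDvd_add_mul (hp : p.Prime) {r : ℕ} (hr : r < p) (q : ℕ) :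
    numChooseNotDvd p (r + p * q) = (r + 1) * numChooseNotDvd p q := by
  rw [numChooseNotDvd, numChooseNotDvd, ← card_range (r + 1), ← card_product]
  refine card_nbij' (fun x => (x % p, x / p)) (fun zy => zy.1 + p * zy.2) ?_ ?_ ?_ ?_
  · intro x hx
    simp only [Order.lt_add_one_iff, Set.mem_ofPred_eq, coe_product, coe_range, coe_filter,
      mem_range, Set.mem_prod, Set.mem_Iio] at hx ⊢
    have key := hp.not_dvd_choose_add_mul_iff hr (Nat.mod_lt x hp.pos) q (x / p)
    rw [Nat.mod_add_div] at key
    obtain ⟨hxr, hxq⟩ := key.mp hx.2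
    exact ⟨by omega, le_of_not_dvd_choose hxq, hxq⟩
  · rintro ⟨z, y⟩ hzy
    simp only [Order.lt_add_one_iff, Set.mem_ofPred_eq, coe_product, coe_range, coe_filter,
      mem_range, Set.mem_prod, Set.mem_Iio] at hzy ⊢
    have key := hp.not_dvd_choose_add_mul_iff hr (show z < p by omega) q y
    exact ⟨by nlinarith, key.mpr ⟨by omega, hzy.2.2⟩⟩
  · intro x _
    exact Nat.mod_add_div x p
  · rintro ⟨z, y⟩ hzy
    simp only [coe_product, coe_range, Set.mem_prod, Set.mem_Iio] at hzy
    have hz : z < p := by omega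
    simp [Nat.add_mul_mod_self_left, Nat.mod_eq_of_lt hz, Nat.add_mul_div_left _ _ hp.pos,
      Nat.div_eq_of_lt hz]

lemma numChooseNotDvd_of_lt (hp : p.Prime) {r : ℕ} (hr : r < p) :
    numChooseNotDvd p r = r + 1 := by
  simpa [numChooseNotDvd_zero hp] using numChooseNotDvd_add_mul hp hr 0

theorem numChooseNotDvd_add_pow_mul (hp : p.Prime) {t r : ℕ} (hr : r < p ^ t) (q : ℕ) :
    numChooseNotDvd p (r + p ^ t * q) = numChooseNotDvd p r * numChooseNotDvd p q := by
  induction t generalizing r with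
  | zero =>
    obtain rfl : r = 0 := by simpa using hr
    simp [numChooseNotDvd_zero hp]
  | succ t ih =>
    have hdiv : r / p < p ^ t := Nat.div_lt_of_lt_mul (by rwa [← pow_succ'])
    have hmod : r % p < p := Nat.mod_lt r hp.pos
    calc numChooseNotDvd p (r + p ^ (t + 1) * q)
        = numChooseNotDvd p (r % p + p * (r / p + p ^ t * q)) := by
          rw [pow_succ', mul_add, mul_assoc, ← add_assoc, Nat.mod_add_div]
      _ = (r % p + 1) * numChooseNotDvd p (r / p) * numChooseNotDvd p q := by
          rw [numChooseNotDvd_add_mul hp hmod, ih hdiv, mul_assoc]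
      _ = numChooseNotDvd p r * numChooseNotDvd p q := by
          rw [← numChooseNotDvd_add_mul hp hmod, Nat.mod_add_div]

lemma numChooseNotDvd_pow_mul (hp : p.Prime) (t q : ℕ) :
    numChooseNotDvd p (p ^ t * q) = numChooseNotDvd p q := by
  simpa [numChooseNotDvd_zero hp] using numChooseNotDvd_add_pow_mul hp (pow_pos hp.pos t) q

theorem numChooseNotDvd_mul_pow_sub_one (hp : p.Prime) {a : ℕ} (ha : 0 < a) (hap : a ≤ p)
    (e : ℕ) : numChooseNotDvd p (a * p ^ e - 1) = a * p ^ e := by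
  induction e with
  | zero =>
    rw [pow_zero, mul_one, numChooseNotDvd_of_lt hp (by omega)]
    omega
  | succ e ih =>
    have hpos : 0 < a * p ^ e := Nat.mul_pos ha (pow_pos hp.pos e)
    have hsplit : a * p ^ (e + 1) - 1 = (p - 1) + p * (a * p ^ e - 1) := by
      have := hp.one_lt
      rw [pow_succ', mul_left_comm, Nat.mul_sub_one]
      have : p ≤ p * (a * p ^ e) := Nat.le_mul_of_pos_right p hpos
      omega
    rw [hsplit, numChooseNotDvd_add_mul hp (by omega), ih, Nat.sub_add_cancel hp.one_le,
      pow_succ']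
    ring

lemma sum_mul_pow_lt_pow (hp : 0 < p) {k : ℕ} {e : Fin k → ℕ} (he : StrictMono e)
    {a : Fin k → ℕ} (ha : ∀ j, a j < p) {t : ℕ} (ht : ∀ j, e j < t) :
    ∑ j, a j * p ^ e j < p ^ t := by
  induction k generalizing t with
  | zero => simpa using pow_pos hp t
  | succ k ih =>
    rw [Fin.sum_univ_castSucc]
    have hinit := ih (e := fun j => e j.castSucc) (he.comp Fin.strictMono_castSucc)
      (fun j => ha j.castSucc) (fun j => he (Fin.castSucc_lt_last j))
    have hlast : (a (Fin.last k) + 1) * p ^ e (Fin.last k) ≤ p ^ t :=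
      calc (a (Fin.last k) + 1) * p ^ e (Fin.last k) ≤ p * p ^ e (Fin.last k) :=
            Nat.mul_le_mul_right _ (ha _)
        _ = p ^ (e (Fin.last k) + 1) := (pow_succ' _ _).symm
        _ ≤ p ^ t := Nat.pow_le_pow_right hp (ht _)
    nlinarith

theorem numChooseNotDvd_sum_mul_pow (hp : p.Prime) {k : ℕ} {e : Fin k → ℕ} (he : StrictMono e)
    {a : Fin k → ℕ} (ha : ∀ j, a j < p) :
    numChooseNotDvd p (∑ j, a j * p ^ e j) = ∏ j, (a j + 1) := by
  induction k with
  | zero => simp [numChooseNotDvd_zero hp]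
  | succ k ih =>
    have hinit := sum_mul_pow_lt_pow hp.pos (e := fun j => e j.castSucc)
      (he.comp Fin.strictMono_castSucc) (fun j => ha j.castSucc)
      (fun j => he (Fin.castSucc_lt_last j))
    rw [Fin.sum_univ_castSucc, Fin.prod_univ_castSucc, mul_comm (a _),
      numChooseNotDvd_add_pow_mul hp hinit, numChooseNotDvd_of_lt hp (ha _),
      ih (e := fun j => e j.castSucc) (he.comp Fin.strictMono_castSucc) (fun j => ha j.castSucc)]

end

theorem stmt5 (p : ℕ) (hp : p.Prime) (k : ℕ) (hk : 0 < k)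
    (e : Fin k → ℕ) (he : StrictMono e)
    (a : Fin k → ℕ) (ha1 : ∀ j, 1 ≤ a j) (ha2 : ∀ j, a j ≤ p - 1)
    (n : ℕ) (hn : n = ∑ j : Fin k, a j * p ^ e j) :
    ((Finset.range n).filter fun x => ¬ p ∣ Nat.choose (n - 1) x).card
      = a ⟨0, hk⟩ * p ^ e ⟨0, hk⟩ *
        ∏ j ∈ Finset.univ.erase (⟨0, hk⟩ : Fin k), (a j + 1) := by
  obtain ⟨k, rfl⟩ := Nat.exists_eq_add_one_of_ne_zero hk.ne'
  have ha : ∀ j, a j < p := fun j => Nat.lt_of_le_sub_one hp.pos (ha2 j)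
  obtain ⟨q, hq⟩ : p ^ (e 0 + 1) ∣ ∑ j : Fin k, a j.succ * p ^ e j.succ :=
    dvd_sum fun j _ => (pow_dvd_pow p (he (Fin.succ_pos j))).mul_left _
  have hlead_pos : 0 < a 0 * p ^ e 0 := Nat.mul_pos (ha1 0) (pow_pos hp.pos _)
  have hlead_lt : a 0 * p ^ e 0 - 1 < p ^ (e 0 + 1) :=
    Nat.sub_one_lt_of_le hlead_pos (pow_succ' p (e 0) ▸ Nat.mul_le_mul_right _ (ha 0).le)
  have hn_split : n = a 0 * p ^ e 0 + p ^ (e 0 + 1) * q := by rw [hn, Fin.sum_univ_succ, hq]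
  calc #{x ∈ range n | ¬ p ∣ (n - 1).choose x}
      = numChooseNotDvd p (n - 1) := by rw [numChooseNotDvd, Nat.sub_add_cancel (by omega)]
    _ = a 0 * p ^ e 0 * numChooseNotDvd p (p ^ (e 0 + 1) * q) := by
      rw [show n - 1 = (a 0 * p ^ e 0 - 1) + p ^ (e 0 + 1) * q by omega,
        numChooseNotDvd_add_pow_mul hp hlead_lt,
        numChooseNotDvd_mul_pow_sub_one hp (ha1 0) (ha 0).le, numChooseNotDvd_pow_mul hp]
    _ = a 0 * p ^ e 0 * ∏ j ∈ univ.erase 0, (a j + 1) := by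
      rw [← hq, Fin.prod_univ_erase_zero, numChooseNotDvd_sum_mul_pow hp
        (e := fun j => e j.succ) (he.comp Fin.strictMono_succ) fun j => ha j.succ]
end

section
/- Let p be a prime, let P be a finite p-group acting by automorphisms on a finite abelian group W, and suppose p divides the order of W. Then there exists a group homomorphism λ : W → ℂˣ with λ not identically 1, such that λ is P-invariant: λ(g·w) = λ(w) for all g ∈ P and w ∈ W. -/
theorem stmt10 (p : ℕ) (hp : p.Prime) (P W : Type) [Group P] [Finite P] [CommGroup W] [Finite W]
    [MulDistribMulAction P W] (hP : IsPGroup p P) (hdvd : p ∣ Nat.card W) :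
    ∃ l : W →* ℂˣ, l ≠ 1 ∧ ∀ (g : P) (w : W), l (g • w) = l w := by
  classical
  -- the dual group
  set D := W →* ℂˣ with hD
  haveI : NeZero ((Monoid.exponent W : ℂ)) :=
    ⟨by exact_mod_cast Monoid.exponent_ne_zero_of_finite⟩
  obtain ⟨e⟩ := CommGroup.monoidHom_mulEquiv_of_hasEnoughRootsOfUnity W ℂ
  haveI : Finite D := Finite.of_equiv W e.symm.toEquiv
  have hcard : Nat.card D = Nat.card W := Nat.card_eq_of_bijective e e.bijective
  -- action of P on D
  letI act : MulAction P D :=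
    { smul := fun g l => l.comp (MulDistribMulAction.toMonoidHom W g⁻¹)
      one_smul := fun l => by
        refine MonoidHom.ext fun w => ?_
        show l ((1 : P)⁻¹ • w) = l w
        rw [inv_one, one_smul]
      mul_smul := fun g h l => by
        refine MonoidHom.ext fun w => ?_
        show l ((g * h)⁻¹ • w) = l (h⁻¹ • g⁻¹ • w)
        rw [mul_inv_rev, mul_smul] }
  have hsmul : ∀ (g : P) (l : D) (w : W), (g • l) w = l (g⁻¹ • w) := fun _ _ _ => rfl
  haveI := Fact.mk hp
  have hmod := hP.card_modEq_card_fixedPoints D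
  have h1 : (1 : D) ∈ MulAction.fixedPoints P D := by
    intro g; ext w; rw [hsmul]; rfl
  have hpdvd : p ∣ Nat.card (MulAction.fixedPoints P D) := by
    have := (hmod.symm.trans (Nat.modEq_zero_iff_dvd.mpr (hcard ▸ hdvd)))
    exact Nat.modEq_zero_iff_dvd.mp this
  have hpos : 0 < Nat.card (MulAction.fixedPoints P D) :=
    Nat.card_pos_iff.mpr ⟨⟨⟨1, h1⟩⟩, Set.Finite.to_subtype (Set.toFinite _)⟩
  have hlt : 1 < Nat.card (MulAction.fixedPoints P D) :=
    lt_of_lt_of_le hp.one_lt (Nat.le_of_dvd hpos hpdvd)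
  haveI : Nontrivial ↑(MulAction.fixedPoints P D) := Finite.one_lt_card_iff_nontrivial.mp hlt
  -- get a fixed point other than 1
  obtain ⟨⟨l, hl⟩, hne⟩ := exists_ne (α := MulAction.fixedPoints P D) ⟨1, h1⟩
  refine ⟨l, ?_, ?_⟩
  · intro h; exact hne (Subtype.ext h)
  · intro g w
    have h2 : (g⁻¹ • l : D) w = l w := by rw [hl g⁻¹]
    rw [hsmul, inv_inv] at h2
    exact h2
end
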